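/- Under the B-spline copula hypotheses, C is 2-increasing: for all 0 ≤ x₁ ≤ x₂ ≤ 1 and 0 ≤ y₁ ≤ y₂ ≤ 1, C(x₂, y₂; R) − C(x₁, y₂; R) − C(x₂, y₁; R) + C(x₁, y₁; R) ≥ 0. -/

import Mathlib

open MeasureTheory intervalIntegral

/-- The B-spline copula `C(x,y;R) = ∑ₖ ∑ₗ r k ℓ * Φ k x * Ψ ℓ y`,
where `Φ k x = ∫_0^x φ k` and `Ψ ℓ y = ∫_0^y ψ ℓ`. -/
noncomputable def bsplineCopula (m n : ℕ) (φ : Fin m → ℝ → ℝ) (ψ : Fin n → ℝ → ℝ)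
    (r : Fin m → Fin n → ℝ) (x y : ℝ) : ℝ :=
  ∑ k, ∑ ℓ, r k ℓ * (∫ u in (0:ℝ)..x, φ k u) * (∫ v in (0:ℝ)..y, ψ ℓ v)

/-! The rectangle increment of `∑ₖ ∑ₗ r k ℓ Φₖ(x) Ψₗ(y)` is `∑ₖ ∑ₗ r k ℓ ΔΦₖ ΔΨₗ`, a sum of
products of nonnegative numbers once the weights are nonnegative and every `Φₖ`, `Ψₗ` is
nondecreasing; the primitives `Φₖ`, `Ψₗ` of nonnegative densities are. -/

theorem monotoneOn_integral_of_nonneg {f : ℝ → ℝ} {a b : ℝ}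
    (hf : IntervalIntegrable f volume a b) (hf_nonneg : ∀ u ∈ Set.Icc a b, 0 ≤ f u) :
    MonotoneOn (fun x => ∫ u in a..x, f u) (Set.Icc a b) := by
  intro x hx y hy hxy
  have hint : ∀ z ∈ Set.Icc a b, IntervalIntegrable f volume a z := fun z hz =>
    hf.mono_set (Set.uIcc_subset_uIcc_left (Set.Icc_subset_uIcc hz))
  have hxy_nonneg : 0 ≤ ∫ u in x..y, f u :=
    integral_nonneg hxy fun u hu => hf_nonneg u ⟨hx.1.trans hu.1, hu.2.trans hy.2⟩
  have := integral_interval_sub_left (hint y hy) (hint x hx)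
  dsimp only
  linarith

theorem sum_mul_mul_rectangle_nonneg {ι κ : Type*} [Fintype ι] [Fintype κ]
    (r : ι → κ → ℝ) (F : ι → ℝ → ℝ) (G : κ → ℝ → ℝ) {x₁ x₂ y₁ y₂ : ℝ}
    (hr : ∀ k ℓ, 0 ≤ r k ℓ) (hF : ∀ k, F k x₁ ≤ F k x₂) (hG : ∀ ℓ, G ℓ y₁ ≤ G ℓ y₂) :
    let H := fun x y => ∑ k, ∑ ℓ, r k ℓ * F k x * G ℓ y
    0 ≤ H x₂ y₂ - H x₁ y₂ - H x₂ y₁ + H x₁ y₁ := by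
  have rectangle : ∀ k ℓ, r k ℓ * F k x₂ * G ℓ y₂ - r k ℓ * F k x₁ * G ℓ y₂
      - r k ℓ * F k x₂ * G ℓ y₁ + r k ℓ * F k x₁ * G ℓ y₁
      = r k ℓ * (F k x₂ - F k x₁) * (G ℓ y₂ - G ℓ y₁) := fun k ℓ => by ring
  simp only [← Finset.sum_sub_distrib, ← Finset.sum_add_distrib, rectangle]
  exact Finset.sum_nonneg fun k _ => Finset.sum_nonneg fun ℓ _ =>
    mul_nonneg (mul_nonneg (hr k ℓ) (sub_nonneg.2 (hF k))) (sub_nonneg.2 (hG ℓ))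

theorem bsplineCopula_two_increasing_general (m n : ℕ)
    (φ : Fin m → ℝ → ℝ) (ψ : Fin n → ℝ → ℝ)
    (r : Fin m → Fin n → ℝ)
    (hφ_nonneg : ∀ k, ∀ u ∈ Set.Icc (0:ℝ) 1, 0 ≤ φ k u)
    (hφ_int : ∀ k, IntervalIntegrable (φ k) volume 0 1)
    (hψ_nonneg : ∀ ℓ, ∀ v ∈ Set.Icc (0:ℝ) 1, 0 ≤ ψ ℓ v)
    (hψ_int : ∀ ℓ, IntervalIntegrable (ψ ℓ) volume 0 1)
    (hr_nonneg : ∀ k ℓ, 0 ≤ r k ℓ) :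
    ∀ x₁ x₂ y₁ y₂ : ℝ, 0 ≤ x₁ → x₁ ≤ x₂ → x₂ ≤ 1 → 0 ≤ y₁ → y₁ ≤ y₂ → y₂ ≤ 1 →
      0 ≤ bsplineCopula m n φ ψ r x₂ y₂ - bsplineCopula m n φ ψ r x₁ y₂
          - bsplineCopula m n φ ψ r x₂ y₁ + bsplineCopula m n φ ψ r x₁ y₁ := by
  intro x₁ x₂ y₁ y₂ hx₁ hx hx₂ hy₁ hy hy₂
  exact sum_mul_mul_rectangle_nonneg r (fun k x => ∫ u in (0:ℝ)..x, φ k u)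
    (fun ℓ y => ∫ v in (0:ℝ)..y, ψ ℓ v) hr_nonneg
    (fun k => monotoneOn_integral_of_nonneg (hφ_int k) (hφ_nonneg k)
      ⟨hx₁, hx.trans hx₂⟩ ⟨hx₁.trans hx, hx₂⟩ hx)
    (fun ℓ => monotoneOn_integral_of_nonneg (hψ_int ℓ) (hψ_nonneg ℓ)
      ⟨hy₁, hy.trans hy₂⟩ ⟨hy₁.trans hy, hy₂⟩ hy)

/-- Under the B-spline copula hypotheses, `C` is 2-increasing. -/
theorem bsplineCopula_two_increasing (m n : ℕ) (hm : 0 < m) (hn : 0 < n)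
    (φ : Fin m → ℝ → ℝ) (ψ : Fin n → ℝ → ℝ)
    (q : Fin m → ℝ) (qs : Fin n → ℝ) (r : Fin m → Fin n → ℝ)
    (hφ_nonneg : ∀ k, ∀ u ∈ Set.Icc (0:ℝ) 1, 0 ≤ φ k u)
    (hφ_int : ∀ k, IntervalIntegrable (φ k) volume 0 1)
    (hφ_total : ∀ k, ∫ u in (0:ℝ)..1, φ k u = 1)
    (hq : ∀ k, 0 < q k)
    (hφ_part : ∀ u ∈ Set.Icc (0:ℝ) 1, ∑ k, q k * φ k u = 1)
    (hψ_nonneg : ∀ ℓ, ∀ v ∈ Set.Icc (0:ℝ) 1, 0 ≤ ψ ℓ v)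
    (hψ_int : ∀ ℓ, IntervalIntegrable (ψ ℓ) volume 0 1)
    (hψ_total : ∀ ℓ, ∫ v in (0:ℝ)..1, ψ ℓ v = 1)
    (hqs : ∀ ℓ, 0 < qs ℓ)
    (hψ_part : ∀ v ∈ Set.Icc (0:ℝ) 1, ∑ ℓ, qs ℓ * ψ ℓ v = 1)
    (hr_nonneg : ∀ k ℓ, 0 ≤ r k ℓ)
    (hr_row : ∀ k, ∑ ℓ, r k ℓ = q k)
    (hr_col : ∀ ℓ, ∑ k, r k ℓ = qs ℓ) :
    ∀ x₁ x₂ y₁ y₂ : ℝ, 0 ≤ x₁ → x₁ ≤ x₂ → x₂ ≤ 1 → 0 ≤ y₁ → y₁ ≤ y₂ → y₂ ≤ 1 →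
      0 ≤ bsplineCopula m n φ ψ r x₂ y₂ - bsplineCopula m n φ ψ r x₁ y₂
          - bsplineCopula m n φ ψ r x₂ y₁ + bsplineCopula m n φ ψ r x₁ y₁ :=
  bsplineCopula_two_increasing_general m n φ ψ r hφ_nonneg hφ_int hψ_nonneg hψ_int hr_nonneg
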